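/- Weak transfer: let α ≥ 1 and suppose the achievement matrix x is obtained from y by averaging achievements among the poor, i.e. x = B·y for some N×N doubly stochastic matrix B with b_{ii} = 1 for every individual i that is not poor in y (ρ_k(y_i) = 0). Then FGT_α(x; z) ≤ FGT_α(y; z). -/

import Mathlib

open Finset

/-- Deprivation gap `r_{ij}^α` for an achievement row `y` (convention `0 ^ (0:ℝ) = 1`). -/
noncomputable def gap {d : ℕ} (z y : Fin d → ℝ) (α : ℝ) (j : Fin d) : ℝ :=
  if y j ≤ z j then ((z j - y j) / z j) ^ α else 0

/-- Network-adjusted deprivation `D_{ij}^α`. -/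
noncomputable def Dnet {d : ℕ} (M : Fin d → Fin d → ℝ) (z y : Fin d → ℝ) (α : ℝ)
    (j : Fin d) : ℝ :=
  gap z y α j + (1 / ((d : ℝ) - 1)) * ∑ j' ∈ Finset.univ.erase j, M j j' * gap z y α j'

/-- Sum `Σ_j` of the `j`-th column of `M`. -/
noncomputable def colSum {d : ℕ} (M : Fin d → Fin d → ℝ) (j : Fin d) : ℝ := ∑ j', M j' j

/-- Weighted deprivation count `D_i = Σ_j w_j D_{ij}^0`. -/
noncomputable def Dcount {d : ℕ} (M : Fin d → Fin d → ℝ) (z w y : Fin d → ℝ) : ℝ :=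
  ∑ j, w j * Dnet M z y 0 j

/-- Dual-cutoff identification function `ρ_k`. -/
noncomputable def rho {d : ℕ} (M : Fin d → Fin d → ℝ) (z w : Fin d → ℝ) (k : ℝ)
    (y : Fin d → ℝ) : ℝ :=
  if k ≤ Dcount M z w y then 1 else 0

/-- Network-adjusted FGT measure with normalizing constant `dt`. -/
noncomputable def FGT {N d : ℕ} (M : Fin d → Fin d → ℝ) (z w : Fin d → ℝ) (k α dt : ℝ)
    (y : Fin N → Fin d → ℝ) : ℝ :=
  (1 / ((N : ℝ) * dt)) * ∑ i, ∑ j, w j * Dnet M z (y i) α j * rho M z w k (y i)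

/-!
For `α ≥ 1` each deprivation gap is a convex function of the achievement, and the weighted
network-adjusted score `Σ_j w_j D_{ij}^α` is a nonnegative combination of gaps, so by Jensen the
score of an averaged row is at most the average of the scores. Since `B` fixes every non-poor
person, the rows and columns of `B` at non-poor people are unit vectors: non-poor people keep
their achievements, and a poor person's new score is an average of scores of poor people only.
Identifying the averaged people can only drop nonnegative terms, and the column sums of `B`
being `1` turn the average over people back into the original sum.
-/

lemma convexOn_max_div_rpow (c : ℝ) {α : ℝ} (hα : 1 ≤ α) :
    ConvexOn ℝ Set.univ (fun t : ℝ => max ((c - t) / c) 0 ^ α) := by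
  set f : ℝ → ℝ := fun t => max ((c - t) / c) 0
  have hf : ConvexOn ℝ Set.univ f :=
    ConvexOn.sup ⟨convex_univ, fun p _ q _ a b _ _ hab => le_of_eq <| by
      simp only [smul_eq_mul]; rw [eq_sub_of_add_eq hab]; ring⟩ (convexOn_const 0 convex_univ)
  have hf0 (t : ℝ) : 0 ≤ f t := le_max_right _ _
  refine ⟨convex_univ, fun p _ q _ a b ha hb hab => ?_⟩
  calc f (a • p + b • q) ^ α ≤ (a • f p + b • f q) ^ α :=
        Real.rpow_le_rpow (hf0 _) (hf.2 trivial trivial ha hb hab) (by linarith)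
    _ ≤ a • f p ^ α + b • f q ^ α :=
        (convexOn_rpow hα).2 (hf0 p) (hf0 q) ha hb hab

section Deprivation

variable {d : ℕ} {M : Fin d → Fin d → ℝ} {z w : Fin d → ℝ} {α : ℝ}

lemma gap_nonneg (hz : ∀ j, 0 < z j) (y : Fin d → ℝ) (j : Fin d) : 0 ≤ gap z y α j := by
  unfold gap
  split_ifs with h
  · exact Real.rpow_nonneg (div_nonneg (sub_nonneg.2 h) (hz j).le) α
  · exact le_rfl

lemma gap_eq_max_rpow (hz : ∀ j, 0 < z j) (hα : 0 < α) (y : Fin d → ℝ) (j : Fin d) :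
    gap z y α j = max ((z j - y j) / z j) 0 ^ α := by
  unfold gap
  split_ifs with h
  · rw [max_eq_left (div_nonneg (sub_nonneg.2 h) (hz j).le)]
  · rw [max_eq_right (div_nonpos_of_nonpos_of_nonneg (by linarith) (hz j).le),
      Real.zero_rpow hα.ne']

variable {ι : Type*} [Fintype ι] {b : ι → ℝ}

lemma gap_average_le (hz : ∀ j, 0 < z j) (hα : 1 ≤ α) (hb0 : ∀ i, 0 ≤ b i)
    (hb1 : ∑ i, b i = 1) (u : ι → Fin d → ℝ) (j : Fin d) :
    gap z (fun j => ∑ i, b i * u i j) α j ≤ ∑ i, b i * gap z (u i) α j := by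
  have hα0 : 0 < α := by linarith
  simp only [gap_eq_max_rpow hz hα0]
  simpa only [smul_eq_mul] using (convexOn_max_div_rpow (z j) hα).map_sum_le
    (fun i _ => hb0 i) hb1 (fun i _ => Set.mem_univ (u i j))

lemma one_div_sub_one_nonneg (hd : 1 ≤ d) : 0 ≤ 1 / ((d : ℝ) - 1) :=
  one_div_nonneg.2 (sub_nonneg.2 (by exact_mod_cast hd))

lemma Dnet_nonneg (hd : 1 ≤ d) (hM0 : ∀ j j', 0 ≤ M j j') (hz : ∀ j, 0 < z j)
    (y : Fin d → ℝ) (j : Fin d) : 0 ≤ Dnet M z y α j :=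
  add_nonneg (gap_nonneg hz y j) <| mul_nonneg (one_div_sub_one_nonneg hd) <|
    sum_nonneg fun j' _ => mul_nonneg (hM0 j j') (gap_nonneg hz y j')

lemma Dnet_average_le (hd : 1 ≤ d) (hM0 : ∀ j j', 0 ≤ M j j') (hz : ∀ j, 0 < z j)
    (hα : 1 ≤ α) (hb0 : ∀ i, 0 ≤ b i) (hb1 : ∑ i, b i = 1) (u : ι → Fin d → ℝ) (j : Fin d) :
    Dnet M z (fun j => ∑ i, b i * u i j) α j ≤ ∑ i, b i * Dnet M z (u i) α j := by
  have hc := one_div_sub_one_nonneg hd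
  calc Dnet M z (fun j => ∑ i, b i * u i j) α j
      ≤ ∑ i, b i * gap z (u i) α j + 1 / ((d : ℝ) - 1) *
          ∑ j' ∈ univ.erase j, M j j' * ∑ i, b i * gap z (u i) α j' := by
        unfold Dnet
        gcongr with j' _
        · exact gap_average_le hz hα hb0 hb1 u j
        · exact hM0 j j'
        · exact gap_average_le hz hα hb0 hb1 u j'
    _ = ∑ i, b i * Dnet M z (u i) α j := by
        simp only [Dnet, mul_add, sum_add_distrib, mul_sum]
        rw [sum_comm (s := univ.erase j)]
        congr 1
        exact sum_congr rfl fun i _ => sum_congr rfl fun j' _ => by ring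

noncomputable def weightedDnet (M : Fin d → Fin d → ℝ) (z w : Fin d → ℝ) (α : ℝ)
    (y : Fin d → ℝ) : ℝ :=
  ∑ j, w j * Dnet M z y α j

lemma weightedDnet_nonneg (hd : 1 ≤ d) (hM0 : ∀ j j', 0 ≤ M j j') (hz : ∀ j, 0 < z j)
    (hw : ∀ j, 0 ≤ w j) (y : Fin d → ℝ) : 0 ≤ weightedDnet M z w α y :=
  sum_nonneg fun j _ => mul_nonneg (hw j) (Dnet_nonneg hd hM0 hz y j)

lemma weightedDnet_average_le (hd : 1 ≤ d) (hM0 : ∀ j j', 0 ≤ M j j') (hz : ∀ j, 0 < z j)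
    (hw : ∀ j, 0 ≤ w j) (hα : 1 ≤ α) (hb0 : ∀ i, 0 ≤ b i) (hb1 : ∑ i, b i = 1)
    (u : ι → Fin d → ℝ) :
    weightedDnet M z w α (fun j => ∑ i, b i * u i j) ≤ ∑ i, b i * weightedDnet M z w α (u i) :=
  calc weightedDnet M z w α (fun j => ∑ i, b i * u i j)
      ≤ ∑ j, w j * ∑ i, b i * Dnet M z (u i) α j :=
        sum_le_sum fun j _ => mul_le_mul_of_nonneg_left
          (Dnet_average_le hd hM0 hz hα hb0 hb1 u j) (hw j)
    _ = ∑ i, b i * weightedDnet M z w α (u i) := by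
        simp only [weightedDnet, mul_sum]
        rw [sum_comm]
        exact sum_congr rfl fun i _ => sum_congr rfl fun j _ => by ring

lemma FGT_eq_sum_weightedDnet_mul_rho {N : ℕ} (k dt : ℝ) (y : Fin N → Fin d → ℝ) :
    FGT M z w k α dt y =
      1 / ((N : ℝ) * dt) * ∑ i, weightedDnet M z w α (y i) * rho M z w k (y i) := by
  simp only [FGT, weightedDnet, sum_mul]

lemma rho_eq_zero_or_one (k : ℝ) (y : Fin d → ℝ) : rho M z w k y = 0 ∨ rho M z w k y = 1 := by
  unfold rho
  split_ifs
  exacts [Or.inr rfl, Or.inl rfl]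

end Deprivation

section Averaging

variable {ι : Type*} [Fintype ι]

lemma apply_eq_zero_of_sum_eq_one {f : ι → ℝ} (hf0 : ∀ i, 0 ≤ f i) (hf1 : ∑ i, f i = 1)
    {i : ι} (hi : f i = 1) {i' : ι} (hne : i' ≠ i) : f i' = 0 := by
  classical
  rw [← add_sum_erase _ _ (mem_univ i), hi, add_eq_left] at hf1
  exact (sum_eq_zero_iff_of_nonneg fun l _ => hf0 l).1 hf1 i' (mem_erase.2 ⟨hne, mem_univ _⟩)

lemma sum_mul_eq_of_apply_eq_one {f : ι → ℝ} (hf0 : ∀ i, 0 ≤ f i) (hf1 : ∑ i, f i = 1)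
    {i : ι} (hi : f i = 1) (v : ι → ℝ) : ∑ i', f i' * v i' = v i := by
  rw [sum_eq_single i (fun i' _ hne => by rw [apply_eq_zero_of_sum_eq_one hf0 hf1 hi hne,
    zero_mul]) (absurd (mem_univ i)), hi, one_mul]

theorem sum_mul_le_of_averaging {X : Type*} {φ ρ : X → ℝ} (hφ : ∀ u, 0 ≤ φ u)
    (hρ : ∀ u, ρ u = 0 ∨ ρ u = 1) {B : ι → ι → ℝ} (hB0 : ∀ i i', 0 ≤ B i i')
    (hBcol : ∀ i', ∑ i, B i i' = 1) {x y : ι → X} (hBfix : ∀ i, ρ (y i) = 0 → B i i = 1)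
    (hxfix : ∀ i, ρ (y i) = 0 → x i = y i) (hφx : ∀ i, φ (x i) ≤ ∑ i', B i i' * φ (y i')) :
    ∑ i, φ (x i) * ρ (x i) ≤ ∑ i, φ (y i) * ρ (y i) := by
  have hρ0 (u : X) : 0 ≤ ρ u := by rcases hρ u with h | h <;> simp [h]
  have hρ1 (u : X) : ρ u ≤ 1 := by rcases hρ u with h | h <;> simp [h]
  have key (i : ι) : φ (x i) * ρ (x i) ≤ ∑ i', B i i' * (φ (y i') * ρ (y i')) := by
    by_cases hi : ρ (y i) = 0
    · rw [hxfix i hi, hi, mul_zero]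
      exact sum_nonneg fun i' _ => mul_nonneg (hB0 i i') (mul_nonneg (hφ _) (hρ0 _))
    calc φ (x i) * ρ (x i) ≤ φ (x i) := mul_le_of_le_one_right (hφ _) (hρ1 _)
      _ ≤ ∑ i', B i i' * φ (y i') := hφx i
      _ = ∑ i', B i i' * (φ (y i') * ρ (y i')) := sum_congr rfl fun i' _ => by
        rcases hρ (y i') with h | h
        · have hne : i ≠ i' := by rintro rfl; exact hi h
          rw [apply_eq_zero_of_sum_eq_one (fun l => hB0 l i') (hBcol i') (hBfix i' h) hne]
          simp
        · rw [h, mul_one]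
  calc ∑ i, φ (x i) * ρ (x i) ≤ ∑ i, ∑ i', B i i' * (φ (y i') * ρ (y i')) :=
        sum_le_sum fun i _ => key i
    _ = ∑ i, φ (y i) * ρ (y i) := by
      rw [sum_comm]
      simp only [← sum_mul, hBcol, one_mul]

end Averaging

theorem FGT_weak_transfer_general
    (d : ℕ) (hd : 2 ≤ d) (z : Fin d → ℝ) (hz : ∀ j, 0 < z j)
    (M : Fin d → Fin d → ℝ) (hM0 : ∀ j j', 0 ≤ M j j')
    (w : Fin d → ℝ) (hw : ∀ j, 0 < w j)
    (dt : ℝ)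
    (k : ℝ) (hk0 : 0 < k) (hk1 : k ≤ dt) (α : ℝ) (hα : 1 ≤ α)
    (N : ℕ)
    (y : Fin N → Fin d → ℝ)
    (B : Fin N → Fin N → ℝ) (hB0 : ∀ i i', 0 ≤ B i i')
    (hBrow : ∀ i, (∑ i', B i i') = 1) (hBcol : ∀ i', (∑ i, B i i') = 1)
    (hBfix : ∀ i, rho M z w k (y i) = 0 → B i i = 1)
    (x : Fin N → Fin d → ℝ) (hxy : ∀ i j, x i j = ∑ i', B i i' * y i' j) :
    FGT M z w k α dt x ≤ FGT M z w k α dt y := by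
  have hd1 : 1 ≤ d := by omega
  have hx (i : Fin N) : x i = fun j => ∑ i', B i i' * y i' j := funext (hxy i)
  rw [FGT_eq_sum_weightedDnet_mul_rho, FGT_eq_sum_weightedDnet_mul_rho]
  refine mul_le_mul_of_nonneg_left ?_
    (one_div_nonneg.2 (mul_nonneg N.cast_nonneg (hk0.le.trans hk1)))
  refine sum_mul_le_of_averaging (weightedDnet_nonneg hd1 hM0 hz fun j => (hw j).le)
    (rho_eq_zero_or_one k) hB0 hBcol hBfix (fun i hi => ?_) (fun i => ?_)
  · rw [hx i]
    exact funext fun j => sum_mul_eq_of_apply_eq_one (hB0 i) (hBrow i) (hBfix i hi) _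
  · rw [hx i]
    exact weightedDnet_average_le hd1 hM0 hz (fun j => (hw j).le) hα (hB0 i) (hBrow i) y

/-- weak transfer — for `α ≥ 1`, averaging achievements among the poor via a
doubly stochastic matrix does not increase FGT. -/
theorem FGT_weak_transfer
    (d : ℕ) (hd : 2 ≤ d) (z : Fin d → ℝ) (hz : ∀ j, 0 < z j)
    (M : Fin d → Fin d → ℝ) (hM0 : ∀ j j', 0 ≤ M j j') (hM1 : ∀ j j', M j j' ≤ 1)
    (hMdiag : ∀ j, M j j = 1)
    (w : Fin d → ℝ) (hw : ∀ j, 0 < w j) (hwsum : (∑ j, w j) = (d : ℝ))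
    (dt : ℝ) (hdt : dt = (d : ℝ) + ((∑ j, w j * colSum M j) - (d : ℝ)) / ((d : ℝ) - 1))
    (k : ℝ) (hk0 : 0 < k) (hk1 : k ≤ dt) (α : ℝ) (hα : 1 ≤ α)
    (N : ℕ) (hN : 1 ≤ N)
    (y : Fin N → Fin d → ℝ) (hy : ∀ i j, 0 ≤ y i j)
    (B : Fin N → Fin N → ℝ) (hB0 : ∀ i i', 0 ≤ B i i')
    (hBrow : ∀ i, (∑ i', B i i') = 1) (hBcol : ∀ i', (∑ i, B i i') = 1)
    (hBfix : ∀ i, rho M z w k (y i) = 0 → B i i = 1)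
    (x : Fin N → Fin d → ℝ) (hxy : ∀ i j, x i j = ∑ i', B i i' * y i' j) :
    FGT M z w k α dt x ≤ FGT M z w k α dt y :=
  FGT_weak_transfer_general d hd z hz M hM0 w hw dt k hk0 hk1 α hα N y B hB0 hBrow hBcol hBfix x hxy
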